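/- If A|B is an H-separable extension (i.e., there exist e_i ∈ (A ⊗_B A)^A and r_i ∈ R = C_A(B) with Σ_i r_i e_i = 1 ⊗ 1) and the right module A_B is balanced, then the double centralizer property holds: C_A(C_A(B)) = B. -/

import Mathlib

open TensorProduct

noncomputable section

namespace D2

variable (A : Type*) [Ring A] (B : Subring A)

/-- The defining relations of `A ⊗_B A` as a quotient of `A ⊗_ℤ A`. -/
def relSub : Submodule ℤ (A ⊗[ℤ] A) :=
  Submodule.span ℤ {x | ∃ (a c : A) (b : B), x = (a * (b : A)) ⊗ₜ[ℤ] c - a ⊗ₜ[ℤ] ((b : A) * c)}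

/-- The tensor square `A ⊗_B A` of a ring extension `B ⊆ A`. -/
abbrev TensorSq := (A ⊗[ℤ] A) ⧸ relSub A B

/-- The class of a simple tensor `a ⊗_B c`. -/
def tmulB (a c : A) : TensorSq A B := Submodule.Quotient.mk (a ⊗ₜ[ℤ] c)

/-- Left multiplication `a₀ • (x ⊗ y) = (a₀ x) ⊗ y` on `A ⊗_B A`. -/
def lmul (a : A) : TensorSq A B →ₗ[ℤ] TensorSq A B :=
  Submodule.mapQ _ _ (TensorProduct.map (LinearMap.mulLeft ℤ a) LinearMap.id) (by
    rw [relSub, Submodule.span_le]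
    rintro x ⟨a', c, b, rfl⟩
    simp only [SetLike.mem_coe, Submodule.mem_comap, map_sub, TensorProduct.map_tmul,
      LinearMap.mulLeft_apply, LinearMap.id_apply]
    refine Submodule.subset_span ⟨a * a', c, b, by erw [map_sub, TensorProduct.map_tmul, TensorProduct.map_tmul]; simp only [LinearMap.mulLeft_apply, LinearMap.id_apply, mul_assoc]⟩)

/-- Right multiplication `(x ⊗ y) • a₀ = x ⊗ (y a₀)` on `A ⊗_B A`. -/
def rmul (a : A) : TensorSq A B →ₗ[ℤ] TensorSq A B :=
  Submodule.mapQ _ _ (TensorProduct.map LinearMap.id (LinearMap.mulRight ℤ a)) (by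
    rw [relSub, Submodule.span_le]
    rintro x ⟨a', c, b, rfl⟩
    simp only [SetLike.mem_coe, Submodule.mem_comap, map_sub, TensorProduct.map_tmul,
      LinearMap.mulRight_apply, LinearMap.id_apply]
    refine Submodule.subset_span ⟨a', c * a, b, by erw [map_sub, TensorProduct.map_tmul, TensorProduct.map_tmul]; simp only [LinearMap.mulRight_apply, LinearMap.id_apply, mul_assoc]⟩)

/-- The multiplication map `A ⊗_B A → A`, `x ⊗ y ↦ x y`. -/
def mulQ : TensorSq A B →ₗ[ℤ] A :=
  Submodule.liftQ _ (LinearMap.mul' ℤ A) (by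
    rw [relSub, Submodule.span_le]
    rintro x ⟨a, c, b, rfl⟩
    simp [LinearMap.mem_ker, mul_assoc]
    erw [LinearMap.mem_ker, map_sub, LinearMap.mul'_apply, LinearMap.mul'_apply, mul_assoc, sub_self])

/-- An element `t` of `A ⊗_B A` is `B`-central when `b t = t b` for all `b ∈ B`. -/
def IsBCentral (t : TensorSq A B) : Prop := ∀ b ∈ B, lmul A B b t = rmul A B b t

/-- An element `t` of `A ⊗_B A` is `A`-central (a Casimir element) when `a t = t a`. -/
def IsACentral (t : TensorSq A B) : Prop := ∀ a : A, lmul A B a t = rmul A B a t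

/-- A `B`-`B`-bimodule endomorphism of `A`. -/
def IsBB (α : A →ₗ[ℤ] A) : Prop :=
  ∀ b ∈ B, ∀ a : A, α ((b : A) * a) = b * α a ∧ α (a * b) = α a * b

/-- A right `B`-module endomorphism of `A`. -/
def IsRightB (f : A →ₗ[ℤ] A) : Prop := ∀ a : A, ∀ b ∈ B, f (a * b) = f a * b

/-- `x ↦ (x·) ⊗ id` as a linear map, used to build Sweedler-type expressions. -/
def lmulTen : A →ₗ[ℤ] (A ⊗[ℤ] A) →ₗ[ℤ] (A ⊗[ℤ] A) where
  toFun a := TensorProduct.map (LinearMap.mulLeft ℤ a) LinearMap.id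
  map_add' a a' := by
    apply TensorProduct.ext'
    intro x y
    simp [add_mul, TensorProduct.add_tmul]
    rfl
  map_smul' z a := by
    apply TensorProduct.ext'
    intro x y
    simp only [TensorProduct.map_tmul, LinearMap.mulLeft_apply, LinearMap.id_apply,
      LinearMap.smul_apply, RingHom.id_apply, smul_mul_assoc, TensorProduct.smul_tmul']
    rfl

/-- For `ζ = Σ u ⊗ v`, the map `a ↦ Σ α(a u) v`, i.e. `α(? ζ¹) ζ²`. -/
def sweed (α : A →ₗ[ℤ] A) (ζ : A ⊗[ℤ] A) : A →ₗ[ℤ] A :=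
  ((LinearMap.mul' ℤ A).comp (TensorProduct.map α LinearMap.id)).comp ((lmulTen A).flip ζ)

/-- For `ζ = Σ u ⊗ v`, the element `Σ u r v` ("sandwich" evaluation `ζ¹ r ζ²`). -/
def sandw (r : A) (ζ : A ⊗[ℤ] A) : A :=
  (LinearMap.mul' ℤ A) ((TensorProduct.map (LinearMap.mulRight ℤ r) LinearMap.id) ζ)

/-- `mul₂ ζ ξ = Σ (u x) ⊗ (y v)` for `ζ = Σ u ⊗ v`, `ξ = Σ x ⊗ y`:
the product `ξ ·_T ζ` of two elements of `T = (A ⊗_B A)^B` on representatives. -/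
def mul₂ : (A ⊗[ℤ] A) →ₗ[ℤ] (A ⊗[ℤ] A) →ₗ[ℤ] (A ⊗[ℤ] A) :=
  TensorProduct.lift <| LinearMap.mk₂ ℤ
    (fun u v => TensorProduct.map (LinearMap.mulLeft ℤ u) (LinearMap.mulRight ℤ v))
    (fun u u' v => by
      apply TensorProduct.ext'
      intro x y
      simp [add_mul, TensorProduct.add_tmul]
      rfl)
    (fun z u v => by
      apply TensorProduct.ext'
      intro x y
      simp only [TensorProduct.map_tmul, LinearMap.mulLeft_apply, LinearMap.mulRight_apply,
        LinearMap.smul_apply, smul_mul_assoc, TensorProduct.smul_tmul']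
      rfl)
    (fun u v v' => by
      apply TensorProduct.ext'
      intro x y
      simp [mul_add, TensorProduct.tmul_add]
      rfl)
    (fun z u v => by
      apply TensorProduct.ext'
      intro x y
      simp only [TensorProduct.map_tmul, LinearMap.mulLeft_apply, LinearMap.mulRight_apply,
        LinearMap.smul_apply, mul_smul_comm, TensorProduct.tmul_smul]
      rfl)

/-- `A` is balanced as a right `B`-module. -/
def RightBalanced : Prop :=
  ∀ φ : A →+ A,
    (∀ f : A →+ A, (∀ a : A, ∀ b ∈ B, f (a * b) = f a * b) → ∀ a, φ (f a) = f (φ a)) →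
    ∃ b ∈ B, ∀ a, φ a = a * b

end D2

end


open TensorProduct in
lemma D2.lmul_mk {A : Type*} [Ring A] (B : Subring A) (a : A) (z : A ⊗[ℤ] A) :
    D2.lmul A B a (Submodule.Quotient.mk z) =
      Submodule.Quotient.mk (TensorProduct.map (LinearMap.mulLeft ℤ a) LinearMap.id z) :=
  Submodule.mapQ_apply _ _ _ _

open TensorProduct in
lemma D2.rmul_mk {A : Type*} [Ring A] (B : Subring A) (a : A) (z : A ⊗[ℤ] A) :
    D2.rmul A B a (Submodule.Quotient.mk z) =
      Submodule.Quotient.mk (TensorProduct.map LinearMap.id (LinearMap.mulRight ℤ a) z) :=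
  Submodule.mapQ_apply _ _ _ _

open TensorProduct in
lemma D2.lmul_lmul {A : Type*} [Ring A] (B : Subring A) (a a' : A) (x : D2.TensorSq A B) :
    D2.lmul A B a (D2.lmul A B a' x) = D2.lmul A B (a * a') x := by
  obtain ⟨z, rfl⟩ := Submodule.Quotient.mk_surjective _ x
  rw [D2.lmul_mk, D2.lmul_mk, D2.lmul_mk]
  congr 1
  induction z using TensorProduct.induction_on with
  | zero => simp
  | tmul u v => simp [mul_assoc]
  | add p q hp hq => simp [hp, hq]

open TensorProduct in
lemma D2.rmul_lmul {A : Type*} [Ring A] (B : Subring A) (a a' : A) (x : D2.TensorSq A B) :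
    D2.rmul A B a (D2.lmul A B a' x) = D2.lmul A B a' (D2.rmul A B a x) := by
  obtain ⟨z, rfl⟩ := Submodule.Quotient.mk_surjective _ x
  rw [D2.lmul_mk, D2.rmul_mk, D2.rmul_mk, D2.lmul_mk]
  congr 1
  induction z using TensorProduct.induction_on with
  | zero => simp
  | tmul u v => simp
  | add p q hp hq => simp [hp, hq]

open TensorProduct in
lemma D2.lmul_tmulB {A : Type*} [Ring A] (B : Subring A) (a x y : A) :
    D2.lmul A B a (D2.tmulB A B x y) = D2.tmulB A B (a * x) y := by
  rw [D2.tmulB, D2.lmul_mk]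
  simp [D2.tmulB]

open TensorProduct in
lemma D2.rmul_tmulB {A : Type*} [Ring A] (B : Subring A) (a x y : A) :
    D2.rmul A B a (D2.tmulB A B x y) = D2.tmulB A B x (y * a) := by
  rw [D2.tmulB, D2.rmul_mk]
  simp [D2.tmulB]

open TensorProduct in
/-- The map `u ⊗ v ↦ f (a * u) * v` is well defined on `A ⊗_B A` when `f` is right
`B`-linear. -/
noncomputable def D2.evalF {A : Type*} [Ring A] (B : Subring A) (f : A →+ A)
    (hf : ∀ x : A, ∀ b ∈ B, f (x * b) = f x * b) (a : A) :
    D2.TensorSq A B →ₗ[ℤ] A :=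
  Submodule.liftQ _ ((LinearMap.mul' ℤ A).comp
    (TensorProduct.map (f.toIntLinearMap.comp (LinearMap.mulLeft ℤ a)) LinearMap.id)) (by
      rw [D2.relSub, Submodule.span_le]
      rintro x ⟨a', c, b, rfl⟩
      rw [SetLike.mem_coe, LinearMap.mem_ker]
      have e1 := (LinearMap.mul' ℤ A ∘ₗ TensorProduct.map (f.toIntLinearMap.comp (LinearMap.mulLeft ℤ a)) LinearMap.id).map_sub ((a' * b) ⊗ₜ[ℤ] c) (a' ⊗ₜ[ℤ] ((b : A) * c))
      refine e1.trans ?_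
      simp only [LinearMap.comp_apply, TensorProduct.map_tmul, LinearMap.mulLeft_apply, LinearMap.id_apply,
        AddMonoidHom.coe_toIntLinearMap, LinearMap.mul'_apply]
      rw [← mul_assoc a a' (b : A), hf (a * a') b b.2, mul_assoc, sub_self])

open TensorProduct in
lemma D2.evalF_mk {A : Type*} [Ring A] (B : Subring A) (f : A →+ A)
    (hf : ∀ x : A, ∀ b ∈ B, f (x * b) = f x * b) (a u v : A) :
    D2.evalF B f hf a (D2.tmulB A B u v) = f (a * u) * v := by
  rw [D2.tmulB, D2.evalF, Submodule.liftQ_apply]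
  exact (by simp : ((LinearMap.mul' ℤ A).comp (TensorProduct.map (f.toIntLinearMap.comp
    (LinearMap.mulLeft ℤ a)) LinearMap.id)) (u ⊗ₜ[ℤ] v) = f (a * u) * v)

open TensorProduct in
/-- an H-separable extension with `A_B` balanced satisfies the double
centralizer property `C_A(C_A(B)) = B`. -/
theorem stmt7 {A : Type*} [Ring A] (B : Subring A)
    (n : ℕ) (e : Fin n → A ⊗[ℤ] A) (r : Fin n → A)
    (hce : ∀ i, D2.IsACentral A B (Submodule.Quotient.mk (e i)))
    (hr : ∀ i, r i ∈ Subring.centralizer (B : Set A))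
    (hsys : ∑ i, D2.lmul A B (r i) (Submodule.Quotient.mk (e i)) = D2.tmulB A B 1 1)
    (hbal : D2.RightBalanced A B) :
    Subring.centralizer ((Subring.centralizer (B : Set A) : Subring A) : Set A) = B := by
  apply le_antisymm
  · intro d hd
    rw [Subring.mem_centralizer_iff] at hd
    -- Step 1: `d ⊗ 1 = 1 ⊗ d` in `A ⊗_B A`.
    have key : D2.tmulB A B d 1 = D2.tmulB A B 1 d := by
      have h1 : D2.tmulB A B d 1 = D2.lmul A B d (D2.tmulB A B 1 1) := by
        rw [D2.lmul_tmulB, mul_one]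
      have h2 : D2.tmulB A B 1 d = D2.rmul A B d (D2.tmulB A B 1 1) := by
        rw [D2.rmul_tmulB, one_mul]
      rw [h1, h2, ← hsys, map_sum, map_sum]
      refine Finset.sum_congr rfl fun i _ => ?_
      rw [D2.lmul_lmul, ← hd (r i) (hr i), ← D2.lmul_lmul, hce i d, D2.rmul_lmul]
    -- Step 2: right multiplication by `d` commutes with all right-`B`-linear maps.
    have hcomm : ∀ f : A →+ A, (∀ a : A, ∀ b ∈ B, f (a * b) = f a * b) →
        ∀ a : A, f a * d = f (a * d) := by
      intro f hf a
      have := congrArg (D2.evalF B f hf a) key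
      rwa [D2.evalF_mk, D2.evalF_mk, mul_one, mul_one, eq_comm] at this
    -- Step 3: apply balancedness to `a ↦ a * d`.
    obtain ⟨b, hb, hab⟩ := hbal (AddMonoidHom.mulRight d) (by
      intro f hf a
      simpa using hcomm f hf a)
    have := hab 1
    simp only [AddMonoidHom.coe_mulRight, one_mul] at this
    rwa [this]
  · intro b hb
    rw [Subring.mem_centralizer_iff]
    intro g hg
    exact (Subring.mem_centralizer_iff.mp hg b hb).symm
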